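/- Let H : [t₀,∞) → ℝ be C¹, nonincreasing, with H(t) ≥ E∞ for all t, and suppose there exist C > 0 and ρ ∈ (0, 1/2) such that H'(t) + C(H(t) - E∞)^{2(1-ρ)} ≤ 0 for all t ≥ t₀. Then there exists a constant C' > 0 such that H(t) - E∞ ≤ C'(1+t)^{-1/(1-2ρ)} for all t ≥ t₀. -/

import Mathlib

/-!
Write `G = H - E∞` and `β = 1 - 2ρ`, so that the hypothesis reads `G' ≤ -C G^(1+β)`. Wherever
`G > 0`, the function `G^(-β)` has derivative `-β G' G^(-β-1) ≥ βC`, hence grows at least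
linearly: `G(t)^(-β) ≥ G(t₀)^(-β) + βC (t - t₀)`. Inverting, `G(t)^β (1 + t)` stays below
`M = (1 + t₀) G(t₀)^β + 1/(βC)`, i.e. `G(t) ≤ M^(1/β) (1 + t)^(-1/β)`.
-/

open Set

theorem mul_sub_le_rpow_neg_sub_rpow_neg {G G' : ℝ → ℝ} {a b β C : ℝ} (hab : a ≤ b)
    (hG : ∀ s ∈ Icc a b, HasDerivAt G (G' s) s) (hpos : ∀ s ∈ Icc a b, 0 < G s) (hβ : 0 ≤ β)
    (hineq : ∀ s ∈ Icc a b, G' s + C * G s ^ (1 + β) ≤ 0) :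
    β * C * (b - a) ≤ G b ^ (-β) - G a ^ (-β) := by
  have hderiv : ∀ s ∈ Icc a b,
      HasDerivAt (fun u ↦ G u ^ (-β)) (G' s * (-β) * G s ^ (-β - 1)) s := fun s hs ↦
    (hG s hs).rpow_const (Or.inl (hpos s hs).ne')
  refine (convex_Icc a b).mul_sub_le_image_sub_of_le_deriv
    (fun s hs ↦ (hderiv s hs).continuousAt.continuousWithinAt)
    (fun s hs ↦ (hderiv s (interior_subset hs)).differentiableAt.differentiableWithinAt)
    (fun s hs ↦ ?_) a (left_mem_Icc.2 hab) b (right_mem_Icc.2 hab) hab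
  have hs := interior_subset hs
  rw [(hderiv s hs).deriv]
  have hGs := hpos s hs
  have hcancel : G s ^ (1 + β) * G s ^ (-β - 1) = 1 := by
    rw [← Real.rpow_add hGs, show 1 + β + (-β - 1) = 0 by ring, Real.rpow_zero]
  have := mul_le_mul_of_nonneg_right (hineq s hs)
    (mul_nonneg hβ (Real.rpow_pos_of_pos hGs (-β - 1)).le)
  linear_combination this - β * C * hcancel

theorem mul_one_add_le_of_inv_add_mul_le_inv {g g₀ k a t : ℝ} (hg₀ : 0 < g₀)
    (hk : 0 < k) (ha : 0 ≤ 1 + a) (hat : a ≤ t) (h : g₀⁻¹ + k * (t - a) ≤ g⁻¹) :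
    g * (1 + t) ≤ (1 + a) * g₀ + 1 / k := by
  have hden : 0 < g₀⁻¹ + k * (t - a) := by
    have : 0 ≤ k * (t - a) := mul_nonneg hk.le (sub_nonneg.2 hat)
    positivity
  have hg_le : g ≤ (g₀⁻¹ + k * (t - a))⁻¹ := by
    rw [← inv_inv g]; exact inv_anti₀ hden h
  have : 1 + t ≤ ((1 + a) * g₀ + 1 / k) * (g₀⁻¹ + k * (t - a)) := by
    have expand : ((1 + a) * g₀ + 1 / k) * (g₀⁻¹ + k * (t - a))
        = (1 + a) + (t - a) + (1 + a) * g₀ * k * (t - a) + 1 / (k * g₀) := by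
      field_simp; ring
    rw [expand]
    have : 0 ≤ (1 + a) * g₀ * k * (t - a) := by
      have := sub_nonneg.2 hat; positivity
    have : 0 ≤ 1 / (k * g₀) := by positivity
    linarith
  calc g * (1 + t) ≤ (g₀⁻¹ + k * (t - a))⁻¹ * (1 + t) := by gcongr; linarith
    _ ≤ (1 + a) * g₀ + 1 / k := by rwa [inv_mul_le_iff₀ hden, mul_comm]

theorem le_rpow_mul_rpow_neg_of_rpow_mul_le {x s β M : ℝ} (hx : 0 ≤ x) (hs : 0 < s) (hβ : 0 < β)
    (h : x ^ β * s ≤ M) : x ≤ M ^ (1 / β) * s ^ (-(1 / β)) := by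
  have hM : 0 ≤ M := le_trans (by positivity) h
  calc x = (x ^ β) ^ (1 / β) := by rw [← Real.rpow_mul hx, mul_one_div_cancel hβ.ne', Real.rpow_one]
    _ ≤ (M / s) ^ (1 / β) := by gcongr; rwa [le_div_iff₀ hs]
    _ = M ^ (1 / β) * s ^ (-(1 / β)) := by
      rw [Real.div_rpow hM hs.le, Real.rpow_neg hs.le, div_eq_mul_inv]

theorem rpow_decay_of_deriv_add_mul_rpow_nonpos {G G' : ℝ → ℝ} {t₀ β C : ℝ} (ht₀ : 0 < 1 + t₀)
    (hG : ∀ t ≥ t₀, HasDerivAt G (G' t) t) (hanti : AntitoneOn G (Ici t₀))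
    (hnonneg : ∀ t ≥ t₀, 0 ≤ G t) (hβ : 0 < β) (hC : 0 < C)
    (hineq : ∀ t ≥ t₀, G' t + C * G t ^ (1 + β) ≤ 0) {t : ℝ} (ht : t₀ ≤ t) :
    G t ≤ ((1 + t₀) * G t₀ ^ β + 1 / (β * C)) ^ (1 / β) * (1 + t) ^ (-(1 / β)) := by
  have ht_pos : 0 < 1 + t := by linarith
  rcases (hnonneg t ht).eq_or_lt with hzero | hGt
  · have hG₀ := hnonneg t₀ le_rfl
    rw [← hzero]; positivity
  have hpos : ∀ s ∈ Icc t₀ t, 0 < G s := fun s hs ↦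
    hGt.trans_le (hanti hs.1 (mem_Ici.2 ht) hs.2)
  have hslope := mul_sub_le_rpow_neg_sub_rpow_neg ht (fun s hs ↦ hG s hs.1) hpos hβ.le
    (fun s hs ↦ hineq s hs.1)
  have hGt₀ := hpos t₀ (left_mem_Icc.2 ht)
  rw [Real.rpow_neg hGt.le, Real.rpow_neg hGt₀.le] at hslope
  refine le_rpow_mul_rpow_neg_of_rpow_mul_le hGt.le ht_pos hβ
    (mul_one_add_le_of_inv_add_mul_le_inv (by positivity) (by positivity) ht₀.le ht ?_)
  linarith

/-- If `H` is C¹, nonincreasing, `H ≥ Einf`, and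
`H'(t) + C(H(t)-Einf)^{2(1-ρ)} ≤ 0` with `ρ ∈ (0,1/2)`, then
`H(t) - Einf ≤ C'(1+t)^{-1/(1-2ρ)}` for all `t ≥ t₀`. -/
theorem stmt8 (t₀ : ℝ) (ht₀ : 0 ≤ t₀) (H : ℝ → ℝ) (H' : ℝ → ℝ)
    (hH : ∀ t ≥ t₀, HasDerivAt H (H' t) t)
    (hmono : AntitoneOn H (Set.Ici t₀))
    (Einf : ℝ) (hlow : ∀ t ≥ t₀, Einf ≤ H t)
    (C : ℝ) (hC : 0 < C) (ρ : ℝ) (hρ : ρ ∈ Set.Ioo (0:ℝ) (1/2))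
    (hineq : ∀ t ≥ t₀, H' t + C * (H t - Einf) ^ (2 * (1 - ρ)) ≤ 0) :
    ∃ C' > (0:ℝ), ∀ t ≥ t₀, H t - Einf ≤ C' * (1 + t) ^ (-(1 / (1 - 2 * ρ))) := by
  have hβ : 0 < 1 - 2 * ρ := by linarith [hρ.2]
  have hexp : 2 * (1 - ρ) = 1 + (1 - 2 * ρ) := by ring
  have hG₀ : 0 ≤ H t₀ - Einf := sub_nonneg.2 (hlow t₀ le_rfl)
  refine ⟨((1 + t₀) * (H t₀ - Einf) ^ (1 - 2 * ρ) + 1 / ((1 - 2 * ρ) * C)) ^ (1 / (1 - 2 * ρ)),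
    by positivity, fun t ht ↦ ?_⟩
  exact rpow_decay_of_deriv_add_mul_rpow_nonpos (by linarith)
    (fun s hs ↦ (hH s hs).sub_const Einf) (fun a ha b hb hab ↦ sub_le_sub_right (hmono ha hb hab) _)
    (fun s hs ↦ sub_nonneg.2 (hlow s hs)) hβ hC (fun s hs ↦ hexp ▸ hineq s hs) ht
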